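/- Let c ≤ 0, λ ≥ 0 be real numbers, j ≥ 1 an integer, and τ > 0. Define h(t) = c·e^{λt}·t^j. Then for all t ∈ [0, τ], h(t) ≥ (c·e^{λτ}·τ^j / τ)·t. -/

import Mathlib

open Real

theorem exp_mul_mul_pow_le_of_le {lam t τ : ℝ} (hlam : 0 ≤ lam) (ht : 0 ≤ t) (htτ : t ≤ τ)
    (k : ℕ) : exp (lam * t) * t ^ k ≤ exp (lam * τ) * τ ^ k :=
  mul_le_mul (exp_le_exp.mpr (mul_le_mul_of_nonneg_left htτ hlam)) (pow_le_pow_left₀ ht htτ k)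
    (pow_nonneg ht k) (exp_pos _).le

theorem stmt_1 (c lam τ : ℝ) (hc : c ≤ 0) (hlam : 0 ≤ lam) (j : ℕ) (hj : 1 ≤ j)
    (hτ : 0 < τ) :
    ∀ t ∈ Set.Icc (0:ℝ) τ,
      c * Real.exp (lam * t) * t ^ j ≥ (c * Real.exp (lam * τ) * τ ^ j / τ) * t := by
  rintro t ⟨ht, htτ⟩
  obtain ⟨k, rfl⟩ := Nat.exists_eq_add_of_le' hj
  have hct : c * t ≤ 0 := mul_nonpos_of_nonpos_of_nonneg hc ht
  calc c * exp (lam * τ) * τ ^ (k + 1) / τ * t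
      = c * t * (exp (lam * τ) * τ ^ k) := by field_simp; ring
    _ ≤ c * t * (exp (lam * t) * t ^ k) :=
        mul_le_mul_of_nonpos_left (exp_mul_mul_pow_le_of_le hlam ht htτ k) hct
    _ = c * exp (lam * t) * t ^ (k + 1) := by ring
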